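/- Let X and Y be real Banach spaces, C ⊆ X and D ⊆ Y nonempty closed sets, f : X → ℝ, g : X → Y, and let x₀ ∈ C with g(x₀) ∈ D be a local minimizer of f over {x ∈ C : g(x) ∈ D}. Assume: f is Gâteaux differentiable at x₀ and Lipschitz with constant K_f > 0 near x₀; g is Gâteaux differentiable at x₀ and Lipschitz with constant K_g > 0 near x₀; the system 'g(x) ∈ D, x ∈ C' is calm at x₀ with constant a > 0; the contingent cones K(C, x₀) and K(D, g(x₀)) are convex; and C is tangentially regular at x₀ or D is tangentially regular at g(x₀). Then there exist y* ∈ Y* with ‖y*‖ ≤ K_f·(1 + a·(1 + K_g)) and ⟨y*, k⟩ ≤ 0 for all k ∈ K(D, g(x₀)), and x* ∈ X* with ⟨x*, h⟩ ≤ 0 for all h ∈ K(C, x₀), such that Df(x₀) + y* ∘ Dg(x₀) + x* = 0 in X*. -/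

import Mathlib

/-!
Clarke's exact penalization, applied first on `C` (where calmness bounds
`dist(x, g⁻¹' D ∩ C)` by `a · dist(g x, D)`) and then on the whole space, makes `x₀` an
unconstrained local minimizer of `f + Kf a · dist(g ·, D) + c · dist(·, C)` for some `c ≥ 0`.
Comparing `g (x₀ + τ h)` with `g x₀ + τ k` and letting `τ → 0⁺` gives
`Df h + Kf a ‖Dg h - k‖ ≥ 0` for `h ∈ K(C, x₀)`, `k ∈ K(D, g x₀)`: tangential regularity of
one of the sets makes its distance quotient tend to `0`, so only the liminf of the other one
matters. As both contingent cones are convex cones, `y ↦ inf_{h, k} (Df h + Kf a ‖y - k + Dg h‖)`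
is sublinear and bounded by `Kf a ‖y‖`; a Hahn–Banach minorant of it is `y*`, and
`x* = -(Df + y* ∘ Dg)`.
-/

open Filter Metric Topology Set

noncomputable section

/-- `g` is Gâteaux differentiable at `x` with (continuous linear) derivative `D`:
for every direction `h`, the difference quotients converge as `τ → 0⁺`. -/
def GateauxAt {X Y : Type*} [NormedAddCommGroup X] [NormedSpace ℝ X]
    [NormedAddCommGroup Y] [NormedSpace ℝ Y] (g : X → Y) (x : X) (D : X →L[ℝ] Y) : Prop :=
  ∀ h : X, Tendsto (fun τ : ℝ => τ⁻¹ • (g (x + τ • h) - g x)) (𝓝[>] (0:ℝ)) (𝓝 (D h))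

/-- Lower Dini directional derivative of the distance function to `A` at `x`
in the direction `h`: `liminf_{τ→0⁺} dist(x + τ h, A)/τ`. -/
def lowerDini {X : Type*} [NormedAddCommGroup X] [NormedSpace ℝ X]
    (A : Set X) (x h : X) : ℝ :=
  liminf (fun τ : ℝ => infDist (x + τ • h) A / τ) (𝓝[>] (0:ℝ))

/-- The contingent (Bouligand) tangent cone to `A` at `x`. -/
def contingentCone {X : Type*} [NormedAddCommGroup X] [NormedSpace ℝ X]
    (A : Set X) (x : X) : Set X :=
  {h | lowerDini A x h = 0}

/-- The adjacent (Ursescu) tangent cone to `A` at `x`. -/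
def adjacentCone {X : Type*} [NormedAddCommGroup X] [NormedSpace ℝ X]
    (A : Set X) (x : X) : Set X :=
  {h | Tendsto (fun τ : ℝ => infDist (x + τ • h) A / τ) (𝓝[>] (0:ℝ)) (𝓝 0)}

/-- `A` is tangentially regular at `x` if the contingent and adjacent cones coincide. -/
def TangentiallyRegular {X : Type*} [NormedAddCommGroup X] [NormedSpace ℝ X]
    (A : Set X) (x : X) : Prop :=
  contingentCone A x = adjacentCone A x

open scoped NNReal

section TangentCones

variable {E : Type*} [NormedAddCommGroup E] [NormedSpace ℝ E] {A : Set E} {x h : E}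

lemma eventually_infDist_add_smul_div_nonneg (A : Set E) (x h : E) :
    ∀ᶠ τ in 𝓝[>] (0:ℝ), 0 ≤ infDist (x + τ • h) A / τ := by
  filter_upwards [self_mem_nhdsWithin] with τ (hτ : 0 < τ)
  exact div_nonneg infDist_nonneg hτ.le

lemma eventually_infDist_add_smul_div_le_norm (hx : x ∈ A) (h : E) :
    ∀ᶠ τ in 𝓝[>] (0:ℝ), infDist (x + τ • h) A / τ ≤ ‖h‖ := by
  filter_upwards [self_mem_nhdsWithin] with τ (hτ : 0 < τ)
  rw [div_le_iff₀ hτ]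
  calc infDist (x + τ • h) A ≤ dist (x + τ • h) x := infDist_le_dist_of_mem hx
    _ = ‖h‖ * τ := by rw [dist_eq_norm, add_sub_cancel_left, norm_smul, Real.norm_of_nonneg hτ.le,
      mul_comm]

theorem mem_contingentCone_iff (hx : x ∈ A) :
    h ∈ contingentCone A x ↔ ∀ η > 0, ∃ᶠ τ in 𝓝[>] (0:ℝ), infDist (x + τ • h) A / τ < η := by
  have hcobdd :=
    isCoboundedUnder_ge_of_eventually_le _ (eventually_infDist_add_smul_div_le_norm hx h)
  have hnonneg := eventually_infDist_add_smul_div_nonneg A x h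
  refine ⟨fun hh η hη => frequently_lt_of_liminf_lt hcobdd (hh.trans_lt hη), fun hfreq => ?_⟩
  refine le_antisymm (le_of_forall_pos_le_add fun η hη => ?_) (le_liminf_of_le hcobdd hnonneg)
  rw [zero_add]
  exact liminf_le_of_frequently_le ((hfreq η hη).mono fun _ => le_of_lt)
    (isBoundedUnder_of_eventually_ge hnonneg)

theorem zero_mem_contingentCone (hx : x ∈ A) : (0 : E) ∈ contingentCone A x :=
  (mem_contingentCone_iff hx).2 fun η hη =>
    Eventually.frequently (Eventually.of_forall fun τ => by simpa [infDist_zero_of_mem hx] using hη)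

theorem smul_mem_contingentCone (hx : x ∈ A) (hh : h ∈ contingentCone A x) {c : ℝ} (hc : 0 < c) :
    c • h ∈ contingentCone A x := by
  rw [mem_contingentCone_iff hx] at hh ⊢
  intro η hη
  have hscale : Tendsto (c⁻¹ * ·) (𝓝[>] (0:ℝ)) (𝓝[>] 0) := by
    conv_rhs => rw [← comap_mulLeft_nhdsGT_zero hc]
    exact tendsto_comap_iff.2 (tendsto_id.congr fun τ => by simp [hc.ne'])
  refine hscale.frequently ((hh (η / c) (div_pos hη hc)).mono fun τ hτ => ?_)
  rw [smul_smul, show c⁻¹ * τ * c = τ by field_simp,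
    show ∀ r : ℝ, r / (c⁻¹ * τ) = c * (r / τ) by intro r; field_simp]
  rwa [lt_div_iff₀' hc] at hτ

theorem add_mem_contingentCone (hx : x ∈ A) (hconv : Convex ℝ (contingentCone A x)) {h₁ h₂ : E}
    (hh₁ : h₁ ∈ contingentCone A x) (hh₂ : h₂ ∈ contingentCone A x) :
    h₁ + h₂ ∈ contingentCone A x := by
  have hmid := hconv hh₁ hh₂ (by norm_num : (0:ℝ) ≤ 1 / 2) (by norm_num : (0:ℝ) ≤ 1 / 2)
    (by norm_num)
  convert smul_mem_contingentCone hx hmid two_pos using 1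
  module

theorem TangentiallyRegular.tendsto_infDist_add_smul_div (hreg : TangentiallyRegular A x)
    (hh : h ∈ contingentCone A x) :
    Tendsto (fun τ : ℝ => infDist (x + τ • h) A / τ) (𝓝[>] 0) (𝓝 0) := by
  rw [TangentiallyRegular] at hreg
  rw [hreg] at hh
  exact hh

def contingentPointedCone (hx : x ∈ A) (hconv : Convex ℝ (contingentCone A x)) :
    PointedCone ℝ E where
  carrier := contingentCone A x
  zero_mem' := zero_mem_contingentCone hx
  add_mem' := add_mem_contingentCone hx hconv
  smul_mem' := by
    rintro ⟨c, hc⟩ h hh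
    rcases hc.eq_or_lt with rfl | hc
    · exact (zero_smul ℝ h).symm ▸ zero_mem_contingentCone hx
    · exact smul_mem_contingentCone hx hh hc

end TangentCones

lemma nonneg_of_eventually_nonneg_add_mul {α : Type*} {l : Filter α} {u v : α → ℝ} {L m : ℝ}
    (hm : 0 ≤ m) (hu : Tendsto u l (𝓝 L)) (hv : ∀ η > 0, ∃ᶠ t in l, v t < η)
    (h : ∀ᶠ t in l, 0 ≤ u t + m * v t) : 0 ≤ L := by
  refine le_of_forall_pos_lt_add fun η hη => ?_
  have hη' : 0 < η / 2 / (m + 1) := by positivity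
  obtain ⟨t, hvt, hut, ht⟩ :=
    ((hv _ hη').and_eventually
      ((hu.eventually_lt_const (by linarith : L < L + η / 2)).and h)).exists
  have hmv : m * v t ≤ m * (η / 2 / (m + 1)) := mul_le_mul_of_nonneg_left hvt.le hm
  have hmη : m * (η / 2 / (m + 1)) < η / 2 := by
    rw [mul_div_assoc', div_lt_iff₀ (by linarith)]
    nlinarith
  linarith

section ExactPenalization

variable {E : Type*} [PseudoMetricSpace E]

/-- Clarke's exact penalization. -/
theorem IsLocalMinOn.isLocalMin_add_mul_infDist {f : E → ℝ} {S U : Set E} {x₀ : E} {K : ℝ≥0}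
    (hmin : IsLocalMinOn f S x₀) (hx₀ : x₀ ∈ S) (hU : U ∈ 𝓝 x₀) (hf : LipschitzOnWith K f U) :
    IsLocalMin (fun x => f x + K * infDist x S) x₀ := by
  obtain ⟨ε, hε, hball⟩ : ∃ ε > 0, ∀ ⦃y⦄, dist y x₀ < ε → y ∈ U ∧ (y ∈ S → f x₀ ≤ f y) :=
    Metric.eventually_nhds_iff.1 ((eventually_mem_set.2 hU).and (eventually_nhdsWithin_iff.1 hmin))
  filter_upwards [ball_mem_nhds x₀ (half_pos hε)] with x (hx : dist x x₀ < ε / 2)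
  have hxU : x ∈ U := (hball (hx.trans (half_lt_self hε))).1
  have hdist : infDist x S < ε / 2 := (infDist_le_dist_of_mem hx₀).trans_lt hx
  have hpen : ∀ t ∈ Ioo (infDist x S) (ε / 2), f x₀ ≤ f x + K * t := by
    rintro t ⟨ht, htε⟩
    obtain ⟨y, hyS, hxy⟩ := (infDist_lt_iff ⟨x₀, hx₀⟩).1 ht
    have hy : dist y x₀ < ε := by
      linarith [dist_triangle y x x₀, dist_comm x y]
    calc f x₀ ≤ f y := (hball hy).2 hyS
      _ ≤ f x + K * dist y x := hf.le_add_mul (hball hy).1 hxU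
      _ ≤ f x + K * t := by rw [dist_comm]; gcongr
  simp only [infDist_zero_of_mem hx₀, mul_zero, add_zero]
  have hlim : Tendsto (fun t => f x + K * t) (𝓝[>] (infDist x S)) (𝓝 (f x + K * infDist x S)) :=
    (tendsto_const_nhds.add (tendsto_id.const_mul _)).mono_left nhdsWithin_le_nhds
  exact ge_of_tendsto hlim (eventually_of_mem (Ioo_mem_nhdsGT hdist) hpen)

end ExactPenalization

theorem IsLocalMinOn.isLocalMinOn_add_mul_infDist_of_calm {X Y : Type*} [PseudoMetricSpace X]
    [PseudoMetricSpace Y] {f : X → ℝ} {g : X → Y} {C U : Set X} {D : Set Y} {x₀ : X} {K : ℝ≥0}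
    {a : ℝ} (hmin : IsLocalMinOn f (g ⁻¹' D ∩ C) x₀) (hx₀ : x₀ ∈ C) (hgx₀ : g x₀ ∈ D)
    (hU : U ∈ 𝓝 x₀) (hf : LipschitzOnWith K f U)
    (hcalm : ∀ᶠ x in 𝓝[C] x₀, infDist x (g ⁻¹' D ∩ C) ≤ a * infDist (g x) D) :
    IsLocalMinOn (fun x => f x + K * a * infDist (g x) D) C x₀ := by
  have hpen := hmin.isLocalMin_add_mul_infDist ⟨hgx₀, hx₀⟩ hU hf
  filter_upwards [hcalm, nhdsWithin_le_nhds hpen] with x hcalmx hpenx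
  simp only [infDist_zero_of_mem hgx₀, infDist_zero_of_mem (show x₀ ∈ g ⁻¹' D ∩ C from ⟨hgx₀, hx₀⟩),
    mul_zero, add_zero] at hpenx ⊢
  calc f x₀ ≤ f x + K * infDist x (g ⁻¹' D ∩ C) := hpenx
    _ ≤ f x + K * (a * infDist (g x) D) := by gcongr
    _ = f x + K * a * infDist (g x) D := by ring

theorem IsLocalMinOn.exists_isLocalMin_add_mul_infDist_of_calm {X Y : Type*}
    [PseudoMetricSpace X] [PseudoMetricSpace Y] {f : X → ℝ} {g : X → Y} {C U V : Set X}
    {D : Set Y} {x₀ : X} {Kf Kg : ℝ≥0} {a : ℝ} (hmin : IsLocalMinOn f (g ⁻¹' D ∩ C) x₀)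
    (hx₀ : x₀ ∈ C) (hgx₀ : g x₀ ∈ D) (hU : U ∈ 𝓝 x₀) (hf : LipschitzOnWith Kf f U)
    (hV : V ∈ 𝓝 x₀) (hg : LipschitzOnWith Kg g V)
    (hcalm : ∀ᶠ x in 𝓝[C] x₀, infDist x (g ⁻¹' D ∩ C) ≤ a * infDist (g x) D) :
    ∃ c : ℝ≥0, IsLocalMin (fun x => f x + Kf * a * infDist (g x) D + c * infDist x C) x₀ :=
  ⟨_, (hmin.isLocalMinOn_add_mul_infDist_of_calm hx₀ hgx₀ hU hf hcalm).isLocalMin_add_mul_infDist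
    hx₀ (inter_mem hU hV) ((hf.mono inter_subset_left).add
      ((lipschitzWith_smul ((Kf : ℝ) * a)).comp_lipschitzOnWith
        ((lipschitz_infDist_pt D).comp_lipschitzOnWith (hg.mono inter_subset_right))))⟩

section FirstOrder

variable {X Y : Type*} [NormedAddCommGroup X] [NormedSpace ℝ X] [NormedAddCommGroup Y]
  [NormedSpace ℝ Y] {f : X → ℝ} {g : X → Y} {C : Set X} {D : Set Y} {x₀ : X}
  {Df : X →L[ℝ] ℝ} {Dg : X →L[ℝ] Y} {b c : ℝ} {h : X} {k : Y}

lemma IsLocalMin.eventually_nonneg_difference_quotient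
    (hmin : IsLocalMin (fun x => f x + b * infDist (g x) D + c * infDist x C) x₀)
    (hx₀ : x₀ ∈ C) (hgx₀ : g x₀ ∈ D) (hb : 0 ≤ b) (h : X) (k : Y) :
    ∀ᶠ τ in 𝓝[>] (0:ℝ), 0 ≤ τ⁻¹ • (f (x₀ + τ • h) - f x₀)
      + b * ‖τ⁻¹ • (g (x₀ + τ • h) - g x₀) - k‖ + b * (infDist (g x₀ + τ • k) D / τ)
      + c * (infDist (x₀ + τ • h) C / τ) := by
  have hline : Tendsto (fun τ : ℝ => x₀ + τ • h) (𝓝[>] 0) (𝓝 x₀) :=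
    ((Continuous.tendsto' (by fun_prop) 0 x₀ (by simp))).mono_left nhdsWithin_le_nhds
  filter_upwards [hline.eventually hmin, self_mem_nhdsWithin] with τ hτmin (hτ : 0 < τ)
  simp only [infDist_zero_of_mem hx₀, infDist_zero_of_mem hgx₀, mul_zero, add_zero] at hτmin
  have hsplit : g (x₀ + τ • h) - (g x₀ + τ • k) = τ • (τ⁻¹ • (g (x₀ + τ • h) - g x₀) - k) := by
    rw [smul_sub, smul_inv_smul₀ hτ.ne']; abel
  have hD : infDist (g (x₀ + τ • h)) D ≤ infDist (g x₀ + τ • k) D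
      + τ * ‖τ⁻¹ • (g (x₀ + τ • h) - g x₀) - k‖ := by
    have := infDist_le_infDist_add_dist (s := D) (x := g (x₀ + τ • h)) (y := g x₀ + τ • k)
    rwa [dist_eq_norm, hsplit, norm_smul, Real.norm_of_nonneg hτ.le] at this
  have hnum : 0 ≤ f (x₀ + τ • h) - f x₀
      + b * (infDist (g x₀ + τ • k) D + τ * ‖τ⁻¹ • (g (x₀ + τ • h) - g x₀) - k‖)
      + c * infDist (x₀ + τ • h) C := by
    nlinarith [mul_le_mul_of_nonneg_left hD hb]
  refine (div_nonneg hnum hτ.le).trans_eq ?_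
  rw [smul_eq_mul]
  field_simp
  ring

theorem IsLocalMin.zero_le_add_mul_norm_sub
    (hmin : IsLocalMin (fun x => f x + b * infDist (g x) D + c * infDist x C) x₀)
    (hx₀ : x₀ ∈ C) (hgx₀ : g x₀ ∈ D) (hb : 0 ≤ b) (hc : 0 ≤ c)
    (hDf : GateauxAt f x₀ Df) (hDg : GateauxAt g x₀ Dg)
    (hreg : TangentiallyRegular C x₀ ∨ TangentiallyRegular D (g x₀))
    (hh : h ∈ contingentCone C x₀) (hk : k ∈ contingentCone D (g x₀)) :
    0 ≤ Df h + b * ‖Dg h - k‖ := by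
  have hlim := (hDf h).add (((hDg h).sub_const k).norm.const_mul b)
  have hineq := hmin.eventually_nonneg_difference_quotient hx₀ hgx₀ hb h k
  rcases hreg with hregC | hregD
  · refine nonneg_of_eventually_nonneg_add_mul hb
      (by simpa only [mul_zero, add_zero] using
        hlim.add ((hregC.tendsto_infDist_add_smul_div hh).const_mul c))
      ((mem_contingentCone_iff hgx₀).1 hk) ?_
    filter_upwards [hineq] with τ hτ
    linarith
  · exact nonneg_of_eventually_nonneg_add_mul hc
      (by simpa only [mul_zero, add_zero] using
        hlim.add ((hregD.tendsto_infDist_add_smul_div hk).const_mul b))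
      ((mem_contingentCone_iff hx₀).1 hh) hineq

end FirstOrder

section ConeMultiplier

variable {X Y : Type*} [NormedAddCommGroup X] [NormedSpace ℝ X] [NormedAddCommGroup Y]
  [NormedSpace ℝ Y] {K₁ : PointedCone ℝ X} {K₂ : PointedCone ℝ Y} {ℓ : X →L[ℝ] ℝ} {T : X →L[ℝ] Y}
  {M : ℝ}

variable (K₁ K₂ ℓ T M) in
/-- The sublinear functional whose linear minorants are the multipliers. -/
def conePenalty (y : Y) : ℝ :=
  ⨅ p : K₁ × K₂, ℓ p.1 + M * ‖y - p.2 + T p.1‖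

lemma conePenalty_le (hM : 0 ≤ M) (hkey : ∀ h ∈ K₁, ∀ k ∈ K₂, 0 ≤ ℓ h + M * ‖T h - k‖)
    (y : Y) {h : X} {k : Y} (hh : h ∈ K₁) (hk : k ∈ K₂) :
    conePenalty K₁ K₂ ℓ T M y ≤ ℓ h + M * ‖y - k + T h‖ := by
  have hbdd : BddBelow (range fun p : K₁ × K₂ => ℓ p.1 + M * ‖y - p.2 + T p.1‖) := by
    refine ⟨-(M * ‖y‖), ?_⟩
    rintro _ ⟨⟨⟨h', hh'⟩, ⟨k', hk'⟩⟩, rfl⟩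
    have htri : ‖T h' - k'‖ ≤ ‖y - k' + T h'‖ + ‖y‖ := by
      calc ‖T h' - k'‖ = ‖(y - k' + T h') - y‖ := by congr 1; abel
        _ ≤ _ := norm_sub_le _ _
    nlinarith [hkey h' hh' k' hk', mul_le_mul_of_nonneg_left htri hM]
  exact ciInf_le hbdd (⟨h, hh⟩, ⟨k, hk⟩)

lemma conePenalty_le_mul_norm (hM : 0 ≤ M)
    (hkey : ∀ h ∈ K₁, ∀ k ∈ K₂, 0 ≤ ℓ h + M * ‖T h - k‖) (y : Y) :
    conePenalty K₁ K₂ ℓ T M y ≤ M * ‖y‖ := by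
  simpa using conePenalty_le hM hkey y (zero_mem K₁) (zero_mem K₂)

lemma conePenalty_add_le (hM : 0 ≤ M) (hkey : ∀ h ∈ K₁, ∀ k ∈ K₂, 0 ≤ ℓ h + M * ‖T h - k‖)
    (y₁ y₂ : Y) :
    conePenalty K₁ K₂ ℓ T M (y₁ + y₂) ≤
      conePenalty K₁ K₂ ℓ T M y₁ + conePenalty K₁ K₂ ℓ T M y₂ := by
  refine le_ciInf_add_ciInf fun ⟨⟨h₁, hh₁⟩, ⟨k₁, hk₁⟩⟩ ⟨⟨h₂, hh₂⟩, ⟨k₂, hk₂⟩⟩ => ?_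
  refine (conePenalty_le hM hkey _ (add_mem hh₁ hh₂) (add_mem hk₁ hk₂)).trans ?_
  have htri : ‖y₁ + y₂ - (k₁ + k₂) + T (h₁ + h₂)‖ ≤ ‖y₁ - k₁ + T h₁‖ + ‖y₂ - k₂ + T h₂‖ := by
    calc _ = ‖(y₁ - k₁ + T h₁) + (y₂ - k₂ + T h₂)‖ := by rw [map_add]; congr 1; abel
      _ ≤ _ := norm_add_le _ _
  rw [map_add ℓ]
  nlinarith [mul_le_mul_of_nonneg_left htri hM]

lemma conePenalty_smul_le (hM : 0 ≤ M) (hkey : ∀ h ∈ K₁, ∀ k ∈ K₂, 0 ≤ ℓ h + M * ‖T h - k‖)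
    {c : ℝ} (hc : 0 < c) (y : Y) :
    conePenalty K₁ K₂ ℓ T M (c • y) ≤ c * conePenalty K₁ K₂ ℓ T M y := by
  unfold conePenalty
  rw [Real.mul_iInf_of_nonneg hc.le]
  refine le_ciInf fun ⟨⟨h, hh⟩, ⟨k, hk⟩⟩ => ?_
  refine (conePenalty_le hM hkey _ (K₁.smul_mem hc.le hh) (K₂.smul_mem hc.le hk)).trans_eq ?_
  rw [map_smul, map_smul, smul_eq_mul, ← smul_sub, ← smul_add, norm_smul, Real.norm_of_nonneg hc.le]
  ring

lemma conePenalty_smul (hM : 0 ≤ M) (hkey : ∀ h ∈ K₁, ∀ k ∈ K₂, 0 ≤ ℓ h + M * ‖T h - k‖)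
    {c : ℝ} (hc : 0 < c) (y : Y) :
    conePenalty K₁ K₂ ℓ T M (c • y) = c * conePenalty K₁ K₂ ℓ T M y := by
  refine le_antisymm (conePenalty_smul_le hM hkey hc y) ?_
  have := conePenalty_smul_le hM hkey (inv_pos.2 hc) (c • y)
  rwa [inv_smul_smul₀ hc.ne', le_inv_mul_iff₀ hc] at this

theorem exists_multiplier_of_cones (hM : 0 ≤ M)
    (hkey : ∀ h ∈ K₁, ∀ k ∈ K₂, 0 ≤ ℓ h + M * ‖T h - k‖) :
    ∃ φ : Y →L[ℝ] ℝ, ‖φ‖ ≤ M ∧ (∀ k ∈ K₂, φ k ≤ 0) ∧ ∀ h ∈ K₁, 0 ≤ ℓ h + φ (T h) := by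
  have hzero : conePenalty K₁ K₂ ℓ T M 0 = 0 := by
    have := conePenalty_smul hM hkey two_pos (0 : Y)
    rw [smul_zero] at this
    linarith
  obtain ⟨φ, -, hφ⟩ := exists_extension_of_le_sublinear ⟨⊥, 0⟩ (conePenalty K₁ K₂ ℓ T M)
    (fun _ hc => conePenalty_smul hM hkey hc) (conePenalty_add_le hM hkey)
    (fun ⟨y, hy⟩ => by simp [(Submodule.mem_bot ℝ).1 hy, hzero])
  have hbound : ∀ y, ‖φ y‖ ≤ M * ‖y‖ := fun y => by
    rw [Real.norm_eq_abs, abs_le]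
    have := (hφ (-y)).trans (conePenalty_le_mul_norm hM hkey (-y))
    rw [map_neg, norm_neg] at this
    exact ⟨by linarith, (hφ y).trans (conePenalty_le_mul_norm hM hkey y)⟩
  refine ⟨φ.mkContinuous M hbound, φ.mkContinuous_norm_le hM hbound, fun k hk => ?_, fun h hh => ?_⟩
  · simpa using (hφ k).trans (conePenalty_le hM hkey k (zero_mem K₁) hk)
  · have := (hφ (-T h)).trans (conePenalty_le hM hkey (-T h) hh (zero_mem K₂))
    simp only [map_neg, sub_zero, neg_add_cancel, norm_zero, mul_zero, add_zero] at this
    simp only [LinearMap.mkContinuous_apply]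
    linarith

end ConeMultiplier

theorem stmt7_general {X Y : Type*} [NormedAddCommGroup X] [NormedSpace ℝ X]
    [NormedAddCommGroup Y] [NormedSpace ℝ Y]
    (C : Set X) (D : Set Y)
    (f : X → ℝ) (g : X → Y) (x₀ : X) (hx₀ : x₀ ∈ C) (hgx₀ : g x₀ ∈ D)
    -- x₀ is a local minimizer of f over {x ∈ C : g x ∈ D}
    (hmin : ∃ ε > 0, ∀ x ∈ C, g x ∈ D → ‖x - x₀‖ ≤ ε → f x₀ ≤ f x)
    -- f is Gâteaux differentiable at x₀ and Lipschitz with constant Kf near x₀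
    (Df : X →L[ℝ] ℝ) (hDf : GateauxAt f x₀ Df)
    (Kf : ℝ) (hKf : 0 < Kf)
    (hfLip : ∃ r > 0, ∀ x ∈ closedBall x₀ r, ∀ x' ∈ closedBall x₀ r,
      |f x - f x'| ≤ Kf * ‖x - x'‖)
    -- g is Gâteaux differentiable at x₀ and Lipschitz with constant Kg near x₀
    (Dg : X →L[ℝ] Y) (hDg : GateauxAt g x₀ Dg)
    (Kg : ℝ) (hKg : 0 < Kg)
    (hgLip : ∃ r > 0, ∀ x ∈ closedBall x₀ r, ∀ x' ∈ closedBall x₀ r,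
      ‖g x - g x'‖ ≤ Kg * ‖x - x'‖)
    -- calmness of the system `g x ∈ D, x ∈ C` at x₀ with constant a
    (a : ℝ) (ha : 0 < a) (s : ℝ) (hs : 0 < s)
    (hcalm : ∀ x ∈ closedBall x₀ s ∩ C, infDist x (g ⁻¹' D ∩ C) ≤ a * infDist (g x) D)
    -- convexity of the contingent cones
    (hconvC : Convex ℝ (contingentCone C x₀))
    (hconvD : Convex ℝ (contingentCone D (g x₀)))
    -- tangential regularity of C at x₀ or of D at g x₀
    (hreg : TangentiallyRegular C x₀ ∨ TangentiallyRegular D (g x₀)) :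
    ∃ ystar : Y →L[ℝ] ℝ, ∃ xstar : X →L[ℝ] ℝ,
      ‖ystar‖ ≤ Kf * (1 + a * (1 + Kg)) ∧
      (∀ k ∈ contingentCone D (g x₀), ystar k ≤ 0) ∧
      (∀ h ∈ contingentCone C x₀, xstar h ≤ 0) ∧
      Df + ystar.comp Dg + xstar = 0 := by
  obtain ⟨ε, hε, hmin⟩ := hmin
  obtain ⟨rf, hrf, hfLip⟩ := hfLip
  obtain ⟨rg, hrg, hgLip⟩ := hgLip
  have hminOn : IsLocalMinOn f (g ⁻¹' D ∩ C) x₀ := by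
    filter_upwards [self_mem_nhdsWithin, mem_nhdsWithin_of_mem_nhds (closedBall_mem_nhds x₀ hε)]
      with x ⟨hxD, hxC⟩ hxε
    exact hmin x hxC hxD (by simpa [dist_eq_norm] using hxε)
  have hcalm' : ∀ᶠ x in 𝓝[C] x₀, infDist x (g ⁻¹' D ∩ C) ≤ a * infDist (g x) D := by
    filter_upwards [self_mem_nhdsWithin, mem_nhdsWithin_of_mem_nhds (closedBall_mem_nhds x₀ hs)]
      with x hxC hxs using hcalm x ⟨hxs, hxC⟩
  obtain ⟨c, hpen⟩ := hminOn.exists_isLocalMin_add_mul_infDist_of_calm hx₀ hgx₀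
    (closedBall_mem_nhds x₀ hrf)
    (.of_dist_le' fun x hx x' hx' => by simpa [Real.dist_eq, dist_eq_norm] using hfLip x hx x' hx')
    (closedBall_mem_nhds x₀ hrg)
    (.of_dist_le' fun x hx x' hx' => by simpa [dist_eq_norm] using hgLip x hx x' hx') hcalm'
  obtain ⟨ystar, hnorm, hKD, hKC⟩ := exists_multiplier_of_cones
    (K₁ := contingentPointedCone hx₀ hconvC) (K₂ := contingentPointedCone hgx₀ hconvD)
    (by positivity) fun h hh k hk =>
      hpen.zero_le_add_mul_norm_sub hx₀ hgx₀ (by positivity) c.2 hDf hDg hreg hh hk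
  refine ⟨ystar, -(Df + ystar.comp Dg), hnorm.trans ?_, hKD, fun h hh => ?_, add_neg_cancel _⟩
  · rw [Real.coe_toNNReal _ hKf.le]
    nlinarith [mul_pos (mul_pos hKf ha) hKg]
  · have := hKC h hh
    simp only [neg_apply, add_apply, ContinuousLinearMap.comp_apply]
    linarith

theorem stmt7 {X Y : Type*} [NormedAddCommGroup X] [NormedSpace ℝ X] [CompleteSpace X]
    [NormedAddCommGroup Y] [NormedSpace ℝ Y] [CompleteSpace Y]
    (C : Set X) (D : Set Y) (hCne : C.Nonempty) (hDne : D.Nonempty)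
    (hCcl : IsClosed C) (hDcl : IsClosed D)
    (f : X → ℝ) (g : X → Y) (x₀ : X) (hx₀ : x₀ ∈ C) (hgx₀ : g x₀ ∈ D)
    -- x₀ is a local minimizer of f over {x ∈ C : g x ∈ D}
    (hmin : ∃ ε > 0, ∀ x ∈ C, g x ∈ D → ‖x - x₀‖ ≤ ε → f x₀ ≤ f x)
    -- f is Gâteaux differentiable at x₀ and Lipschitz with constant Kf near x₀
    (Df : X →L[ℝ] ℝ) (hDf : GateauxAt f x₀ Df)
    (Kf : ℝ) (hKf : 0 < Kf)
    (hfLip : ∃ r > 0, ∀ x ∈ closedBall x₀ r, ∀ x' ∈ closedBall x₀ r,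
      |f x - f x'| ≤ Kf * ‖x - x'‖)
    -- g is Gâteaux differentiable at x₀ and Lipschitz with constant Kg near x₀
    (Dg : X →L[ℝ] Y) (hDg : GateauxAt g x₀ Dg)
    (Kg : ℝ) (hKg : 0 < Kg)
    (hgLip : ∃ r > 0, ∀ x ∈ closedBall x₀ r, ∀ x' ∈ closedBall x₀ r,
      ‖g x - g x'‖ ≤ Kg * ‖x - x'‖)
    -- calmness of the system `g x ∈ D, x ∈ C` at x₀ with constant a
    (a : ℝ) (ha : 0 < a) (s : ℝ) (hs : 0 < s)
    (hcalm : ∀ x ∈ closedBall x₀ s ∩ C, infDist x (g ⁻¹' D ∩ C) ≤ a * infDist (g x) D)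
    -- convexity of the contingent cones
    (hconvC : Convex ℝ (contingentCone C x₀))
    (hconvD : Convex ℝ (contingentCone D (g x₀)))
    -- tangential regularity of C at x₀ or of D at g x₀
    (hreg : TangentiallyRegular C x₀ ∨ TangentiallyRegular D (g x₀)) :
    ∃ ystar : Y →L[ℝ] ℝ, ∃ xstar : X →L[ℝ] ℝ,
      ‖ystar‖ ≤ Kf * (1 + a * (1 + Kg)) ∧
      (∀ k ∈ contingentCone D (g x₀), ystar k ≤ 0) ∧
      (∀ h ∈ contingentCone C x₀, xstar h ≤ 0) ∧
      Df + ystar.comp Dg + xstar = 0 :=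
  stmt7_general C D f g x₀ hx₀ hgx₀ hmin Df hDf Kf hKf hfLip Dg hDg Kg hKg hgLip a ha s hs hcalm
    hconvC hconvD hreg
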